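/- arXiv:2512.12127 — 2 statements merged into one kernel-verified Lean document; each statement's English description precedes it below -/
import Mathlib

section
/- Let F = ℂ((t)) and let L ⊆ F^n be a lattice. If u, v ∈ trop(L), then the coordinatewise minimum u ⊕ v (with (u ⊕ v)_j = min(u_j, v_j)) belongs to trop(L); moreover for every integer m ≥ 0 and every u ∈ trop(L), the vector u + m·(1,…,1) belongs to trop(L). Hence trop(L) is closed under the tropical (min-plus) semimodule operations with nonnegative integer scalars. -/
open scoped Classical

noncomputable section

/-- The normalized valuation on formal Laurent series: the smallest exponent of the
support for a nonzero series, and `⊤` for the zero series. -/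
def lval {k : Type} [Field k] (x : LaurentSeries k) : WithTop ℤ :=
  if x = 0 then ⊤ else (x.order : WithTop ℤ)

variable {k : Type} [Field k] {r n : ℕ}

/-- Membership in the `O_F`-row span of the matrix `A`, i.e. in the lattice
`L = O_F^r A`, where `O_F = k[[t]]` is the set of Laurent series of valuation `≥ 0`. -/
def inRowSpan (A : Matrix (Fin r) (Fin n) (LaurentSeries k))
    (x : Fin n → LaurentSeries k) : Prop :=
  ∃ y : Fin r → LaurentSeries k, (∀ i, (0 : WithTop ℤ) ≤ lval (y i)) ∧
    ∀ j, x j = ∑ i, y i * A i j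

/-- The tropicalization of the lattice `L = O_F^r A`: `v ∈ trop L` iff `v` is the
coordinatewise valuation of a point of `L` with all coordinates nonzero. -/
def tropMem (A : Matrix (Fin r) (Fin n) (LaurentSeries k)) (v : Fin n → ℤ) : Prop :=
  ∃ x : Fin n → LaurentSeries k, inRowSpan A x ∧
    ∀ j, x j ≠ 0 ∧ lval (x j) = (v j : WithTop ℤ)

open HahnSeries

lemma lval_of_ne {x : LaurentSeries k} (hx : x ≠ 0) : lval x = (x.order : WithTop ℤ) :=
  if_neg hx

lemma lval_single_mul (m : ℤ) {c : k} (hc : c ≠ 0) (b : LaurentSeries k) :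
    lval (single m c * b) = (m : WithTop ℤ) + lval b := by
  by_cases hb : b = 0
  · simp [hb, lval]
  · have hs : (single m c : LaurentSeries k) ≠ 0 := single_ne_zero hc
    have hne : single m c * b ≠ 0 := mul_ne_zero hs hb
    rw [lval_of_ne hne, lval_of_ne hb, order_mul hs hb, order_single hc]
    push_cast
    rfl

lemma min_lval_le_lval_add {a b : LaurentSeries k} :
    min (lval a) (lval b) ≤ lval (a + b) := by
  by_cases ha : a = 0
  · simp [ha, lval]
  by_cases hb : b = 0
  · simp [hb, lval]
  by_cases hab : a + b = 0
  · simp [hab, lval]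
  rw [lval_of_ne ha, lval_of_ne hb, lval_of_ne hab, ← WithTop.coe_min, WithTop.coe_le_coe]
  exact min_order_le_order_add hab

/-- **`trop(L)` is a tropical semimodule over the nonnegative integers.** For a lattice
`L ⊆ ℂ((t))^n`, `trop(L)` is closed under the coordinatewise minimum `u ⊕ v`, and under
adding a nonnegative integer multiple of the all-ones vector. -/
theorem tropMem_min_closed_and_shift_closed
    {r n : ℕ} (A : Matrix (Fin r) (Fin n) (LaurentSeries ℂ)) :
    (∀ u v : Fin n → ℤ, tropMem A u → tropMem A v →
      tropMem A (fun j => min (u j) (v j))) ∧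
    (∀ (m : ℕ) (u : Fin n → ℤ), tropMem A u →
      tropMem A (fun j => u j + (m : ℤ))) := by
  constructor
  · rintro u v ⟨a, ⟨ya, hya0, hyas⟩, ha⟩ ⟨b, ⟨yb, hyb0, hybs⟩, hb⟩
    -- orders
    have hau : ∀ j, (a j).order = u j := by
      intro j
      have := (ha j).2
      rw [lval_of_ne (ha j).1] at this
      exact_mod_cast this
    have hbv : ∀ j, (b j).order = v j := by
      intro j
      have := (hb j).2
      rw [lval_of_ne (hb j).1] at this
      exact_mod_cast this
    set f : Fin n → ℂ := fun j =>
      -(a j).coeff (min (u j) (v j)) / (b j).coeff (min (u j) (v j)) with hf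
    obtain ⟨c, hc⟩ := Infinite.exists_notMem_finset
      (insert (0 : ℂ) (Finset.image f Finset.univ))
    have hc0 : c ≠ 0 := fun h => hc (by simp [h])
    have hcf : ∀ j, c ≠ f j := by
      intro j h
      exact hc (Finset.mem_insert_of_mem (Finset.mem_image.2 ⟨j, Finset.mem_univ j, h.symm⟩))
    set z : Fin n → LaurentSeries ℂ := fun j => a j + single (0 : ℤ) c * b j with hz
    have hcoeff : ∀ j, (z j).coeff (min (u j) (v j)) ≠ 0 := by
      intro j
      have hzc : (z j).coeff (min (u j) (v j)) =
          (a j).coeff (min (u j) (v j)) + c * (b j).coeff (min (u j) (v j)) := by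
        rw [hz]
        simp [coeff_add, coeff_single_zero_mul]
      rw [hzc]
      by_cases hbc : (b j).coeff (min (u j) (v j)) = 0
      · have hduv : min (u j) (v j) = u j := by
          rcases min_cases (u j) (v j) with ⟨h1, _⟩ | ⟨h1, _⟩
          · exact h1
          · exfalso
            rw [h1, ← hbv j] at hbc
            exact (coeff_order_eq_zero.not.2 (hb j).1) hbc
        rw [hbc, mul_zero, add_zero, hduv, ← hau j]
        exact coeff_order_eq_zero.not.2 (ha j).1
      · intro hzero
        apply hcf j
        rw [hf]
        field_simp
        linear_combination hzero
    refine ⟨z, ⟨fun i => ya i + single (0 : ℤ) c * yb i, ?_, ?_⟩, ?_⟩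
    · intro i
      refine le_trans ?_ (min_lval_le_lval_add)
      rw [le_min_iff]
      refine ⟨hya0 i, ?_⟩
      rw [lval_single_mul _ hc0]
      simpa using hyb0 i
    · intro j
      rw [hz]
      simp only [add_mul, Finset.sum_add_distrib, mul_assoc, ← Finset.mul_sum]
      rw [hyas j, hybs j]
    · intro j
      have hne : z j ≠ 0 := ne_zero_of_coeff_ne_zero (hcoeff j)
      refine ⟨hne, ?_⟩
      have hord : (z j).order = min (u j) (v j) := by
        apply le_antisymm (order_le_of_coeff_ne_zero (hcoeff j))
        have hmul : (single (0 : ℤ) c * b j).order = v j := by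
          rw [order_mul (single_ne_zero hc0) (hb j).1, order_single hc0, zero_add, hbv j]
        have := min_order_le_order_add (x := a j) (y := single (0 : ℤ) c * b j) hne
        rwa [hau j, hmul] at this
      rw [lval_of_ne hne, hord]
  · rintro m u ⟨a, ⟨ya, hya0, hyas⟩, ha⟩
    set z : Fin n → LaurentSeries ℂ := fun j => single (m : ℤ) (1 : ℂ) * a j with hz
    refine ⟨z, ⟨fun i => single (m : ℤ) (1 : ℂ) * ya i, ?_, ?_⟩, ?_⟩
    · intro i
      rw [lval_single_mul _ one_ne_zero]
      have := hya0 i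
      have hm : (0 : WithTop ℤ) ≤ (m : ℤ) := by exact_mod_cast Int.ofNat_nonneg m
      calc (0 : WithTop ℤ) ≤ (m : ℤ) + 0 := by simpa using hm
      _ ≤ (m : ℤ) + lval (ya i) := by exact add_le_add le_rfl (hya0 i)
    · intro j
      rw [hz]
      simp only [mul_assoc, ← Finset.mul_sum]
      rw [hyas j]
    · intro j
      have hne : z j ≠ 0 := mul_ne_zero (single_ne_zero one_ne_zero) (ha j).1
      refine ⟨hne, ?_⟩
      rw [hz]
      rw [show (fun j => single (m:ℤ) (1:ℂ) * a j) j = single (m:ℤ) (1:ℂ) * a j from rfl,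
        lval_single_mul _ one_ne_zero, (ha j).2]
      push_cast
      rw [add_comm]

end
end

section
/- Let k be a field, F = k((t)) with normalized valuation val, and fix an integer M. Let A, A' ∈ Mat_{r×n}(F) be two matrices such that val(A_{ij} − A'_{ij}) ≥ M for all i, j, and let L and L' be the O_F-row spans of A and A' respectively. Then the tropicalizations of L and L' agree below level M: {v ∈ trop(L) : v_j < M for all j} = {v ∈ trop(L') : v_j < M for all j}. -/
open scoped Classical

noncomputable section

variable {k : Type} [Field k] {r n : ℕ}

lemma lval_eq_orderTop (x : LaurentSeries k) : lval x = x.orderTop := by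
  unfold lval
  by_cases h : x = 0
  · simp [h]
  · rw [if_neg h, ← HahnSeries.order_eq_orderTop_of_ne_zero h]

lemma le_lval_sum {α : Type*} (s : Finset α) (f : α → LaurentSeries k) (c : WithTop ℤ)
    (h : ∀ a ∈ s, c ≤ lval (f a)) : c ≤ lval (∑ a ∈ s, f a) := by
  classical
  induction s using Finset.induction_on with
  | empty => simp [lval]
  | @insert a s hnot ih =>
    rw [Finset.sum_insert hnot, lval_eq_orderTop]
    refine le_trans ?_ HahnSeries.min_orderTop_le_orderTop_add
    refine le_min ?_ ?_
    · rw [← lval_eq_orderTop]; exact h a (Finset.mem_insert_self a s)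
    · rw [← lval_eq_orderTop]
      exact ih fun b hb => h b (Finset.mem_insert_of_mem hb)

lemma lval_mul_ge (x y : LaurentSeries k) : lval x + lval y ≤ lval (x * y) := by
  rw [lval_eq_orderTop, lval_eq_orderTop, lval_eq_orderTop]
  exact (HahnSeries.orderTop_mul _ _).ge

/-- One direction of the truncation invariance. -/
lemma tropMem_of_tropMem (M : ℤ)
    (A A' : Matrix (Fin r) (Fin n) (LaurentSeries k))
    (hAA' : ∀ (i : Fin r) (j : Fin n), ((M : ℤ) : WithTop ℤ) ≤ lval (A i j - A' i j))
    (v : Fin n → ℤ) (hv : tropMem A v) (hlt : ∀ j, v j < M) : tropMem A' v := by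
  obtain ⟨x, ⟨y, hy, hx⟩, hval⟩ := hv
  set x' : Fin n → LaurentSeries k := fun j => ∑ i, y i * A' i j with hx'
  refine ⟨x', ⟨y, hy, fun j => rfl⟩, fun j => ?_⟩
  -- the difference has valuation ≥ M
  have hdiff : ((M : ℤ) : WithTop ℤ) ≤ lval (x j - x' j) := by
    have : x j - x' j = ∑ i, y i * (A i j - A' i j) := by
      rw [hx j, hx']
      simp [mul_sub, Finset.sum_sub_distrib]
    rw [this]
    refine le_lval_sum _ _ _ fun i _ => ?_
    refine le_trans ?_ (lval_mul_ge (y i) (A i j - A' i j))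
    calc ((M : ℤ) : WithTop ℤ) = 0 + (M : ℤ) := by rw [zero_add]
      _ ≤ lval (y i) + lval (A i j - A' i j) := add_le_add (hy i) (hAA' i j)
  obtain ⟨hxne, hxval⟩ := hval j
  have hlt' : lval (x j) < lval (x j - x' j) := by
    rw [hxval]
    refine lt_of_lt_of_le ?_ hdiff
    exact_mod_cast hlt j
  -- x' j = x j + (x' j - x j), and lval (x' j - x j) > lval (x j)
  have hkey : (x' j).orderTop = (x j).orderTop := by
    have h1 : x' j = x j + (x' j - x j) := by ring
    rw [h1]
    refine HahnSeries.orderTop_add_eq_left ?_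
    have : (x' j - x j) = -(x j - x' j) := by ring
    rw [this, HahnSeries.orderTop_neg, ← lval_eq_orderTop, ← lval_eq_orderTop]
    exact hlt'
  have hx'val : lval (x' j) = ((v j : ℤ) : WithTop ℤ) := by
    rw [lval_eq_orderTop, hkey, ← lval_eq_orderTop, hxval]
  refine ⟨?_, hx'val⟩
  intro h0
  rw [h0] at hx'val
  simp [lval] at hx'val

/-- **Truncation invariance of the tropicalization.** If two matrices `A, A'` over
`F = k((t))` satisfy `val(A_{ij} − A'_{ij}) ≥ M` for all `i, j`, then the
tropicalizations of their `O_F`-row spans agree below level `M`. -/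
theorem trop_eq_below_truncation_level
    {k : Type} [Field k] {r n : ℕ} (M : ℤ)
    (A A' : Matrix (Fin r) (Fin n) (LaurentSeries k))
    (hAA' : ∀ (i : Fin r) (j : Fin n), ((M : ℤ) : WithTop ℤ) ≤ lval (A i j - A' i j)) :
    {v : Fin n → ℤ | tropMem A v ∧ ∀ j, v j < M} =
      {v : Fin n → ℤ | tropMem A' v ∧ ∀ j, v j < M} := by
  have hsymm : ∀ (i : Fin r) (j : Fin n), ((M : ℤ) : WithTop ℤ) ≤ lval (A' i j - A i j) := by
    intro i j
    have : A' i j - A i j = -(A i j - A' i j) := by ring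
    rw [this, lval_eq_orderTop, HahnSeries.orderTop_neg, ← lval_eq_orderTop]
    exact hAA' i j
  ext v
  simp only [Set.mem_setOf_eq]
  constructor
  · rintro ⟨hm, hlt⟩
    exact ⟨tropMem_of_tropMem M A A' hAA' v hm hlt, hlt⟩
  · rintro ⟨hm, hlt⟩
    exact ⟨tropMem_of_tropMem M A' A hsymm v hm hlt, hlt⟩

end
end
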